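/- For g ≥ 3 odd, the ideal J_g^+ of ℂ[α,γ] is generated by ζ_g^+ together with γ·J_{g−2}^+. Moreover, for every i ≥ 0 one has γ^i ζ_{g−2i}^+ ∈ J_g^+. -/
import Mathlib


open MvPolynomial

/-- ζ_k^+ ∈ ℂ[α,γ] (variables: X 0 = α, X 1 = γ):
    ζ_{k+1}^+ = α ζ_k^+ + 16k² ζ_{k−1}^+ + 2k(k−1) γ ζ_{k−2}^+ for k even, and
    ζ_{k+1}^+ = α ζ_k^+ + 2k(k−1) γ ζ_{k−2}^+ for k odd. -/
noncomputable def zp : ℕ → MvPolynomial (Fin 2) ℂ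
  | 0 => 1
  | 1 => X 0
  | 2 => X 0 * zp 1
  | (n + 3) =>
      if n % 2 = 0 then
        X 0 * zp (n + 2) + C (16 * ((n : ℂ) + 2) ^ 2) * zp (n + 1)
          + C (2 * ((n : ℂ) + 2) * ((n : ℂ) + 1)) * X 1 * zp n
      else
        X 0 * zp (n + 2) + C (2 * ((n : ℂ) + 2) * ((n : ℂ) + 1)) * X 1 * zp n

/-- ζ_k^+ for an integer index k, with ζ_k^+ = 0 for k < 0. -/
noncomputable def zpZ (k : ℤ) : MvPolynomial (Fin 2) ℂ :=
  if k < 0 then 0 else zp k.toNat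

/-- J_g^+ = (ζ_g^+, ζ_{g+1}^+, ζ_{g+2}^+) ⊆ ℂ[α,γ], for a natural number g. -/
noncomputable def Jp (g : ℕ) : Ideal (MvPolynomial (Fin 2) ℂ) :=
  Ideal.span {zp g, zp (g + 1), zp (g + 2)}

lemma zp_rec_odd (m : ℕ) (hm : m % 2 = 1) :
    zp (m+3) = X 0 * zp (m+2) + C (2*((m:ℂ)+2)*((m:ℂ)+1)) * X 1 * zp m := by
  rw [zp, if_neg (by omega)]

lemma zp_rec_even (m : ℕ) (hm : m % 2 = 0) :
    zp (m+3) = X 0 * zp (m+2) + C (16*((m:ℂ)+2)^2) * zp (m+1)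
      + C (2*((m:ℂ)+2)*((m:ℂ)+1)) * X 1 * zp m := by
  rw [zp, if_pos hm]

lemma zpZ_eq (t : ℤ) (n : ℕ) (h : t = n) : zpZ t = zp n := by subst h; simp [zpZ]

lemma zpZ_neg (t : ℤ) (h : t < 0) : zpZ t = 0 := by simp [zpZ, h]

lemma c_ne (m : ℕ) : (2*((m:ℂ)+2)*((m:ℂ)+1)) ≠ 0 := by
  have h : (2*((m:ℂ)+2)*((m:ℂ)+1)) = ((2*(m+2)*(m+1) : ℕ) : ℂ) := by push_cast; ring
  rw [h]
  exact Nat.cast_ne_zero.mpr (by positivity)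

lemma mem_odd (I : Ideal (MvPolynomial (Fin 2) ℂ)) (m i : ℕ) (hm : m % 2 = 1)
    (h3 : X 1 ^ i * zp (m+3) ∈ I) (h2 : X 1 ^ i * zp (m+2) ∈ I) :
    X 1 ^ (i+1) * zp m ∈ I := by
  have key : X 1 * zp m = C (2*((m:ℂ)+2)*((m:ℂ)+1))⁻¹ * (zp (m+3) - X 0 * zp (m+2)) := by
    rw [zp_rec_odd m hm,
      show X 0 * zp (m+2) + C (2*((m:ℂ)+2)*((m:ℂ)+1)) * X 1 * zp m - X 0 * zp (m+2)
        = C (2*((m:ℂ)+2)*((m:ℂ)+1)) * (X 1 * zp m) from by ring,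
      ← mul_assoc, ← C_mul, inv_mul_cancel₀ (c_ne m), C_1, one_mul]
  have he : X 1 ^ (i+1) * zp m
      = C (2*((m:ℂ)+2)*((m:ℂ)+1))⁻¹ * (X 1 ^ i * zp (m+3))
        - C (2*((m:ℂ)+2)*((m:ℂ)+1))⁻¹ * X 0 * (X 1 ^ i * zp (m+2)) := by
    rw [pow_succ, mul_assoc, key]; ring
  rw [he]
  exact I.sub_mem (Ideal.mul_mem_left _ _ h3) (Ideal.mul_mem_left _ _ h2)

lemma mem_even (I : Ideal (MvPolynomial (Fin 2) ℂ)) (m i : ℕ) (hm : m % 2 = 0)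
    (h3 : X 1 ^ i * zp (m+3) ∈ I) (h2 : X 1 ^ i * zp (m+2) ∈ I)
    (h1 : X 1 ^ i * zp (m+1) ∈ I) :
    X 1 ^ (i+1) * zp m ∈ I := by
  have key : X 1 * zp m = C (2*((m:ℂ)+2)*((m:ℂ)+1))⁻¹
      * (zp (m+3) - X 0 * zp (m+2) - C (16*((m:ℂ)+2)^2) * zp (m+1)) := by
    rw [zp_rec_even m hm,
      show X 0 * zp (m+2) + C (16*((m:ℂ)+2)^2) * zp (m+1)
          + C (2*((m:ℂ)+2)*((m:ℂ)+1)) * X 1 * zp m - X 0 * zp (m+2)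
          - C (16*((m:ℂ)+2)^2) * zp (m+1)
        = C (2*((m:ℂ)+2)*((m:ℂ)+1)) * (X 1 * zp m) from by ring,
      ← mul_assoc, ← C_mul, inv_mul_cancel₀ (c_ne m), C_1, one_mul]
  have he : X 1 ^ (i+1) * zp m
      = C (2*((m:ℂ)+2)*((m:ℂ)+1))⁻¹ * (X 1 ^ i * zp (m+3))
        - C (2*((m:ℂ)+2)*((m:ℂ)+1))⁻¹ * X 0 * (X 1 ^ i * zp (m+2))
        - C (2*((m:ℂ)+2)*((m:ℂ)+1))⁻¹ * C (16*((m:ℂ)+2)^2) * (X 1 ^ i * zp (m+1)) := by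
    rw [pow_succ, mul_assoc, key]; ring
  rw [he]
  exact I.sub_mem (I.sub_mem (Ideal.mul_mem_left _ _ h3) (Ideal.mul_mem_left _ _ h2))
    (Ideal.mul_mem_left _ _ h1)

lemma Jp_mem (g j : ℕ) (h : j = g ∨ j = g + 1 ∨ j = g + 2) : zp j ∈ Jp g := by
  apply Ideal.subset_span
  rcases h with rfl | rfl | rfl
  · exact Set.mem_insert _ _
  · exact Set.mem_insert_of_mem _ (Set.mem_insert _ _)
  · exact Set.mem_insert_of_mem _ (Set.mem_insert_of_mem _ rfl)
/-- For g ≥ 3 odd, J_g^+ is generated by ζ_g^+ together with γ·J_{g−2}^+, and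
    γ^i ζ_{g−2i}^+ ∈ J_g^+ for every i ≥ 0. -/
theorem Jp_odd_structure (g : ℕ) (hg : 3 ≤ g) (hodd : Odd g) :
    Jp g = Ideal.span {zp g} ⊔ Ideal.span {(X 1 : MvPolynomial (Fin 2) ℂ)} * Jp (g - 2) ∧
    ∀ i : ℕ, (X 1 : MvPolynomial (Fin 2) ℂ) ^ i * zpZ ((g : ℤ) - 2 * i) ∈ Jp g := by
  obtain ⟨k, rfl⟩ : ∃ k, g = k + 3 := ⟨g - 3, by omega⟩
  have hk : k % 2 = 0 := by
    rcases hodd with ⟨t, ht⟩; omega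
  -- generators
  have hz0 : zp (k+3) ∈ Jp (k+3) := Jp_mem _ _ (Or.inl rfl)
  have hz1 : zp (k+4) ∈ Jp (k+3) := Jp_mem _ _ (Or.inr (Or.inl (by omega)))
  have hz2 : zp (k+5) ∈ Jp (k+3) := Jp_mem _ _ (Or.inr (Or.inr (by omega)))
  have hX1 : X 1 * zp (k+1) ∈ Jp (k+3) := by
    simpa using mem_odd (Jp (k+3)) (k+1) 0 (by omega) (by simpa using hz1) (by simpa using hz0)
  have hX2 : X 1 * zp (k+2) ∈ Jp (k+3) := by
    simpa using mem_even (Jp (k+3)) (k+2) 0 (by omega) (by simpa using hz2)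
      (by simpa using hz1) (by simpa using hz0)
  have hJ2 : Jp (k+3-2) = Ideal.span {zp (k+1), zp (k+2), zp (k+3)} := by
    have e : k+3-2 = k+1 := by omega
    rw [Jp, e, show k+1+1 = k+2 from by omega, show k+1+2 = k+3 from by omega]
  constructor
  · apply le_antisymm
    · rw [Jp, show k+3+1 = k+4 from by omega, show k+3+2 = k+5 from by omega, Ideal.span_le]
      have mem0 : zp (k+3) ∈ Ideal.span {zp (k+3)}
          ⊔ Ideal.span {(X 1 : MvPolynomial (Fin 2) ℂ)} * Jp (k+3-2) :=
        Ideal.mem_sup_left (Ideal.subset_span rfl)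
      have memX : ∀ j, (j = k+1 ∨ j = k+2) → X 1 * zp j ∈ Ideal.span {zp (k+3)}
          ⊔ Ideal.span {(X 1 : MvPolynomial (Fin 2) ℂ)} * Jp (k+3-2) := by
        intro j hj
        have hb : zp j ∈ Jp (k+3-2) := by
          rw [hJ2]
          rcases hj with rfl | rfl
          · exact Ideal.subset_span (Set.mem_insert _ _)
          · exact Ideal.subset_span (Set.mem_insert_of_mem _ (Set.mem_insert _ _))
        exact Ideal.mem_sup_right (Ideal.mul_mem_mul (Ideal.mem_span_singleton_self _) hb)
      have mem1 : zp (k+4) ∈ Ideal.span {zp (k+3)}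
          ⊔ Ideal.span {(X 1 : MvPolynomial (Fin 2) ℂ)} * Jp (k+3-2) := by
        rw [show k+4 = (k+1)+3 from by omega, zp_rec_odd (k+1) (by omega),
          show k+1+2 = k+3 from by omega, mul_assoc]
        exact add_mem (Ideal.mul_mem_left _ _ mem0)
          (Ideal.mul_mem_left _ _ (memX _ (Or.inl rfl)))
      have mem2 : zp (k+5) ∈ Ideal.span {zp (k+3)}
          ⊔ Ideal.span {(X 1 : MvPolynomial (Fin 2) ℂ)} * Jp (k+3-2) := by
        rw [show k+5 = (k+2)+3 from by omega, zp_rec_even (k+2) (by omega),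
          show k+2+2 = k+4 from by omega, show k+2+1 = k+3 from by omega, mul_assoc]
        exact add_mem (add_mem (Ideal.mul_mem_left _ _ mem1) (Ideal.mul_mem_left _ _ mem0))
          (Ideal.mul_mem_left _ _ (memX _ (Or.inr rfl)))
      rintro p hp
      simp only [Set.mem_insert_iff, Set.mem_singleton_iff] at hp
      rcases hp with rfl | rfl | rfl
      · exact mem0
      · exact mem1
      · exact mem2
    · apply sup_le
      · rw [Ideal.span_le, Set.singleton_subset_iff]; exact hz0
      · rw [hJ2, Ideal.span_mul_span', Ideal.span_le]
        rintro p ⟨a, ha, b, hb, rfl⟩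
        simp only [Set.mem_singleton_iff] at ha
        simp only [Set.mem_insert_iff, Set.mem_singleton_iff] at hb
        subst ha
        rcases hb with rfl | rfl | rfl
        · exact hX1
        · exact hX2
        · exact Ideal.mul_mem_left _ _ hz0
  · -- strengthened induction
    have main : ∀ i : ℕ,
        X 1 ^ i * zpZ (((k+3:ℕ) : ℤ) - 2*i) ∈ Jp (k+3) ∧
        X 1 ^ i * zpZ (((k+3:ℕ) : ℤ) + 1 - 2*i) ∈ Jp (k+3) ∧
        X 1 ^ i * zpZ (((k+3:ℕ) : ℤ) + 2 - 2*i) ∈ Jp (k+3) := by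
      intro i
      induction i with
      | zero =>
        refine ⟨?_, ?_, ?_⟩
        · rw [zpZ_eq _ (k+3) (by push_cast; ring)]; simpa using hz0
        · rw [zpZ_eq _ (k+4) (by push_cast; ring)]; simpa using hz1
        · rw [zpZ_eq _ (k+5) (by push_cast; ring)]; simpa using hz2
      | succ i ih =>
        obtain ⟨ih1, ih2, ih3⟩ := ih
        refine ⟨?_, ?_, ?_⟩
        · by_cases hneg : (((k+3:ℕ) : ℤ) - 2*(i+1:ℕ)) < 0
          · rw [zpZ_neg _ hneg, mul_zero]; exact Ideal.zero_mem _
          · push_neg at hneg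
            obtain ⟨m, hm⟩ : ∃ m : ℕ, (((k+3:ℕ) : ℤ) - 2*(i+1:ℕ)) = m :=
              ⟨(((k+3:ℕ) : ℤ) - 2*(i+1:ℕ)).toNat, by omega⟩
            rw [zpZ_eq _ m hm]
            have hmk : m + 2*i + 2 = k + 3 := by push_cast at hm; omega
            apply mem_odd _ _ _ (by omega)
            · rw [← zpZ_eq (((k+3:ℕ) : ℤ) + 1 - 2*i) (m+3) (by push_cast; push_cast at hm; omega)]
              exact ih2
            · rw [← zpZ_eq (((k+3:ℕ) : ℤ) - 2*i) (m+2) (by push_cast; push_cast at hm; omega)]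
              exact ih1
        · by_cases hneg : (((k+3:ℕ) : ℤ) + 1 - 2*(i+1:ℕ)) < 0
          · rw [zpZ_neg _ hneg, mul_zero]; exact Ideal.zero_mem _
          · push_neg at hneg
            obtain ⟨m, hm⟩ : ∃ m : ℕ, (((k+3:ℕ) : ℤ) + 1 - 2*(i+1:ℕ)) = m :=
              ⟨(((k+3:ℕ) : ℤ) + 1 - 2*(i+1:ℕ)).toNat, by omega⟩
            rw [zpZ_eq _ m hm]
            have hmk : m + 2*i + 2 = k + 4 := by push_cast at hm; omega
            apply mem_even _ _ _ (by omega)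
            · rw [← zpZ_eq (((k+3:ℕ) : ℤ) + 2 - 2*i) (m+3) (by push_cast; push_cast at hm; omega)]
              exact ih3
            · rw [← zpZ_eq (((k+3:ℕ) : ℤ) + 1 - 2*i) (m+2) (by push_cast; push_cast at hm; omega)]
              exact ih2
            · rw [← zpZ_eq (((k+3:ℕ) : ℤ) - 2*i) (m+1) (by push_cast; push_cast at hm; omega)]
              exact ih1
        · have he : (((k+3:ℕ) : ℤ) + 2 - 2*(i+1:ℕ)) = (((k+3:ℕ) : ℤ) - 2*i) := by
            push_cast; ring
          rw [he, pow_succ, mul_comm (X 1 ^ i) (X 1), mul_assoc]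
          exact Ideal.mul_mem_left _ _ ih1
    exact fun i => (main i).1
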